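/- Let D ⊆ ℝⁿ be a nonempty closed convex set of the form D = {d ∈ ℝⁿ : Gᵀd = Gᵀv and x + d ≥ 0} for some G ∈ ℝ^{n×m}, v ∈ ℝⁿ and x ∈ ℝⁿ, let ζ > 0, and let H ∈ ℝ^{n×n} be symmetric with H ⪰ ζI; for g ∈ ℝⁿ let d(g) ∈ D denote the unique minimizer of d' ↦ gᵀd' + (1/2)d'ᵀHd' over D. Let b ∈ ℝᵐ, τ > 0, and define Δl(τ, g', d') := −τ g'ᵀd' + ‖b‖ − ‖b + Gᵀd'‖. Let (Ω, F, P) be a probability space, γ ∈ ℝⁿ with ‖γ‖ ≤ κ for some κ > 0, ρ ≥ 0, and let G' : Ω → ℝⁿ be a random vector with E[G'] = γ and E[‖G' − γ‖²] ≤ ρ. Then E[Δl(τ, G', d(G'))] − Δl(τ, γ, d(γ)) ≤ τ ζ⁻¹(ρ + κ√ρ). -/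

import Mathlib

open Matrix

/-- Euclidean norm of a vector in `ℝᵏ` (represented as `Fin k → ℝ`). -/
noncomputable def nrm2 {k : ℕ} (a : Fin k → ℝ) : ℝ := Real.sqrt (∑ i, (a i) ^ 2)

open MeasureTheory

lemma nrm2_nonneg {k : ℕ} (a : Fin k → ℝ) : 0 ≤ nrm2 a := Real.sqrt_nonneg _

lemma nrm2_sq {k : ℕ} (a : Fin k → ℝ) : nrm2 a ^ 2 = a ⬝ᵥ a := by
  rw [nrm2, Real.sq_sqrt (Finset.sum_nonneg fun i _ => sq_nonneg _)]
  simp [dotProduct, sq]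

lemma nrm2_neg {k : ℕ} (a : Fin k → ℝ) : nrm2 (-a) = nrm2 a := by
  simp [nrm2]

lemma dot_le_nrm2 {k : ℕ} (a b : Fin k → ℝ) : a ⬝ᵥ b ≤ nrm2 a * nrm2 b := by
  have h := Finset.sum_mul_sq_le_sq_mul_sq Finset.univ a b
  have h2 : a ⬝ᵥ b ≤ Real.sqrt ((∑ i, (a i)^2) * ∑ i, (b i)^2) := by
    rw [dotProduct]
    calc ∑ i, a i * b i ≤ |∑ i, a i * b i| := le_abs_self _
      _ = Real.sqrt ((∑ i, a i * b i)^2) := (Real.sqrt_sq_eq_abs _).symm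
      _ ≤ Real.sqrt ((∑ i, (a i)^2) * ∑ i, (b i)^2) := Real.sqrt_le_sqrt h
  rwa [Real.sqrt_mul (Finset.sum_nonneg fun i _ => sq_nonneg _)] at h2

lemma abs_dot_le_nrm2 {k : ℕ} (a b : Fin k → ℝ) : |a ⬝ᵥ b| ≤ nrm2 a * nrm2 b := by
  rw [abs_le]
  constructor
  · have := dot_le_nrm2 (-a) b
    rw [neg_dotProduct, nrm2_neg] at this
    linarith
  · exact dot_le_nrm2 a b

lemma norm_le_nrm2 {k : ℕ} (a : Fin k → ℝ) : ‖a‖ ≤ nrm2 a := by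
  refine (pi_norm_le_iff_of_nonneg (nrm2_nonneg a)).2 fun i => ?_
  have : |a i| = Real.sqrt ((a i)^2) := (Real.sqrt_sq_eq_abs _).symm
  rw [Real.norm_eq_abs, this, nrm2]
  exact Real.sqrt_le_sqrt (Finset.single_le_sum (fun j _ => sq_nonneg (a j)) (Finset.mem_univ i))

lemma nrm2_le_sqrt_mul_norm {k : ℕ} (a : Fin k → ℝ) : nrm2 a ≤ Real.sqrt k * ‖a‖ := by
  have h1 : ∑ i, (a i)^2 ≤ (k : ℝ) * ‖a‖^2 := by
    calc ∑ i, (a i)^2 ≤ ∑ _i : Fin k, ‖a‖^2 := by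
          refine Finset.sum_le_sum fun i _ => ?_
          have := norm_le_pi_norm a i
          rw [Real.norm_eq_abs] at this
          nlinarith [abs_nonneg (a i), le_abs_self (a i), neg_abs_le (a i)]
      _ = (k : ℝ) * ‖a‖^2 := by simp [mul_comm]
  calc nrm2 a ≤ Real.sqrt ((k:ℝ) * ‖a‖^2) := Real.sqrt_le_sqrt h1
    _ = Real.sqrt k * ‖a‖ := by
        rw [Real.sqrt_mul (Nat.cast_nonneg k), Real.sqrt_sq (norm_nonneg a)]

lemma nrm2_continuous {k : ℕ} : Continuous (nrm2 : (Fin k → ℝ) → ℝ) :=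
  Real.continuous_sqrt.comp (continuous_finset_sum _ fun i _ => (continuous_apply i).pow 2)


/-- Bias bound for model reductions: with `Δl(τ,g',d') := −τg'ᵀd' + ‖b‖ − ‖b + Gᵀd'‖`
and `D = {d : Gᵀd = Gᵀv, x + d ≥ 0}`,
`E[Δl(τ,G',d(G'))] − Δl(τ,γ,d(γ)) ≤ τζ⁻¹(ρ + κ√ρ)` when `E[G'] = γ`, `‖γ‖ ≤ κ`, and
`E[‖G' − γ‖²] ≤ ρ`. -/
theorem expected_model_reduction_difference_bound
    {n m : ℕ} (D : Set (Fin n → ℝ))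
    (G : Matrix (Fin n) (Fin m) ℝ) (v x : Fin n → ℝ)
    (hDdef : D = {d : Fin n → ℝ | Gᵀ *ᵥ d = Gᵀ *ᵥ v ∧ 0 ≤ x + d})
    (hDne : D.Nonempty)
    (ζ : ℝ) (hζ : 0 < ζ) (H : Matrix (Fin n) (Fin n) ℝ)
    (hHsymm : H.IsHermitian) (hHζ : (H - ζ • (1 : Matrix (Fin n) (Fin n) ℝ)).PosSemidef)
    (dfun : (Fin n → ℝ) → (Fin n → ℝ))
    (hdfun : ∀ g : Fin n → ℝ, dfun g ∈ D ∧ ∀ d' ∈ D,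
        g ⬝ᵥ dfun g + (1 / 2) * (dfun g ⬝ᵥ (H *ᵥ dfun g)) ≤
          g ⬝ᵥ d' + (1 / 2) * (d' ⬝ᵥ (H *ᵥ d')))
    (b : Fin m → ℝ) (τ : ℝ) (hτ : 0 < τ)
    (Ω : Type*) [MeasurableSpace Ω] (P : Measure Ω) [IsProbabilityMeasure P]
    (γ : Fin n → ℝ) (κ : ℝ) (hκ : 0 < κ) (hγ : nrm2 γ ≤ κ) (ρ : ℝ) (hρ : 0 ≤ ρ)
    (G' : Ω → (Fin n → ℝ)) (hGmeas : Measurable G')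
    (hGint : Integrable G' P) (hGmean : ∫ ω, G' ω ∂P = γ)
    (hGint2 : Integrable (fun ω => nrm2 (G' ω - γ) ^ 2) P)
    (hGmom : ∫ ω, nrm2 (G' ω - γ) ^ 2 ∂P ≤ ρ) :
    (∫ ω, (-(τ * (G' ω ⬝ᵥ dfun (G' ω))) + nrm2 b - nrm2 (b + Gᵀ *ᵥ dfun (G' ω))) ∂P)
        - (-(τ * (γ ⬝ᵥ dfun γ)) + nrm2 b - nrm2 (b + Gᵀ *ᵥ dfun γ)) ≤
      τ * ζ⁻¹ * (ρ + κ * Real.sqrt ρ) := by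
  have hmem : ∀ d : Fin n → ℝ, d ∈ D ↔ (Gᵀ *ᵥ d = Gᵀ *ᵥ v ∧ 0 ≤ x + d) := by
    intro d; rw [hDdef]; exact Iff.rfl
  -- symmetry of H in dot products
  have hT : Hᵀ = H := by
    have := hHsymm.eq
    rwa [Matrix.conjTranspose_eq_transpose_of_trivial] at this
  have hsym : ∀ p q : Fin n → ℝ, p ⬝ᵥ (H *ᵥ q) = q ⬝ᵥ (H *ᵥ p) := by
    intro p q
    rw [Matrix.dotProduct_mulVec, ← Matrix.mulVec_transpose, hT, dotProduct_comm]
  -- quadratic lower bound from positive semidefiniteness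
  have hquad : ∀ u : Fin n → ℝ, ζ * (nrm2 u)^2 ≤ u ⬝ᵥ (H *ᵥ u) := by
    intro u
    have h := hHζ.dotProduct_mulVec_nonneg u
    have hstar : star u = u := by
      funext i; simp
    rw [hstar, Matrix.sub_mulVec, dotProduct_sub, Matrix.smul_mulVec,
      Matrix.one_mulVec, dotProduct_smul, smul_eq_mul] at h
    rw [nrm2_sq]
    linarith
  have hquad0 : ∀ u : Fin n → ℝ, 0 ≤ u ⬝ᵥ (H *ᵥ u) := by
    intro u
    refine le_trans ?_ (hquad u)
    positivity
  -- variational inequality at the minimizer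
  have hVI : ∀ g d₂, d₂ ∈ D → 0 ≤ (g + H *ᵥ dfun g) ⬝ᵥ (d₂ - dfun g) := by
    intro g d₂ hd₂
    obtain ⟨hG1, hx1⟩ := (hmem _).1 (hdfun g).1
    obtain ⟨hG2, hx2⟩ := (hmem _).1 hd₂
    set d₁ := dfun g with hd₁def
    set u := d₂ - d₁ with hu
    set a := (g + H *ᵥ d₁) ⬝ᵥ u with ha
    set c := u ⬝ᵥ (H *ᵥ u) with hc
    have hc0 : 0 ≤ c := hquad0 u
    have key : ∀ t : ℝ, 0 < t → t ≤ 1 → 0 ≤ a + t * (c/2) := by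
      intro t ht0 ht1
      have hmemt : d₁ + t • u ∈ D := by
        refine (hmem _).2 ⟨?_, ?_⟩
        · rw [Matrix.mulVec_add, Matrix.mulVec_smul, hu, Matrix.mulVec_sub, hG1, hG2]
          simp
        · intro i
          have h1 := hx1 i; have h2 := hx2 i
          have hui : u i = d₂ i - d₁ i := by rw [hu]; simp
          simp only [Pi.add_apply, Pi.smul_apply, Pi.sub_apply, Pi.zero_apply,
            smul_eq_mul, Pi.le_def] at *
          rw [hui]
          nlinarith
      have hopt := (hdfun g).2 _ hmemt
      have expand : g ⬝ᵥ (d₁ + t • u) + (1/2) * ((d₁ + t • u) ⬝ᵥ (H *ᵥ (d₁ + t • u)))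
          = (g ⬝ᵥ d₁ + (1/2) * (d₁ ⬝ᵥ (H *ᵥ d₁))) + (t * a + t^2 * (c/2)) := by
        rw [Matrix.mulVec_add, Matrix.mulVec_smul, ha, hc]
        simp only [dotProduct_add, add_dotProduct, dotProduct_smul, smul_dotProduct,
          smul_eq_mul]
        rw [hsym d₁ u, dotProduct_comm (H *ᵥ d₁) u]
        ring
      rw [← hd₁def] at hopt
      rw [expand] at hopt
      have h3 : 0 ≤ t * a + t^2 * (c/2) := by linarith
      by_contra hneg
      push_neg at hneg
      nlinarith [mul_pos ht0 (neg_pos.mpr hneg)]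
    refine le_of_forall_pos_le_add fun ε hε => ?_
    have hcp : (0:ℝ) < c + 1 := by linarith
    have ht0 : 0 < min 1 (ε / (c+1)) := lt_min one_pos (div_pos hε hcp)
    have hk := key _ ht0 (min_le_left _ _)
    have ht2 : min 1 (ε / (c+1)) * (c+1) ≤ ε := by
      rw [← le_div_iff₀ hcp]
      exact min_le_right _ _
    have : min 1 (ε / (c+1)) * (c/2) ≤ ε := by
      have := mul_le_mul_of_nonneg_left (show c/2 ≤ c+1 by linarith) ht0.le
      linarith
    linarith
  -- Lipschitz property of dfun
  have hLip : ∀ g₁ g₂, nrm2 (dfun g₁ - dfun g₂) ≤ ζ⁻¹ * nrm2 (g₁ - g₂) := by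
    intro g₁ g₂
    have h1 := hVI g₁ (dfun g₂) (hdfun g₂).1
    have h2 := hVI g₂ (dfun g₁) (hdfun g₁).1
    set d₁ := dfun g₁ with hd1
    set d₂ := dfun g₂ with hd2
    set u := d₂ - d₁ with hu
    have hsum : u ⬝ᵥ (H *ᵥ u) ≤ (g₁ - g₂) ⬝ᵥ u := by
      have e : (g₁ + H *ᵥ d₁) ⬝ᵥ (d₂ - d₁) + (g₂ + H *ᵥ d₂) ⬝ᵥ (d₁ - d₂)
          = (g₁ - g₂) ⬝ᵥ u - u ⬝ᵥ (H *ᵥ u) := by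
        rw [hu]
        simp only [Matrix.mulVec_sub, add_dotProduct, sub_dotProduct, dotProduct_sub]
        rw [dotProduct_comm (H *ᵥ d₁) d₂, dotProduct_comm (H *ᵥ d₁) d₁,
          dotProduct_comm (H *ᵥ d₂) d₁, dotProduct_comm (H *ᵥ d₂) d₂,
          hsym d₁ d₂]
        ring
      linarith
    have hCS : (g₁ - g₂) ⬝ᵥ u ≤ nrm2 (g₁ - g₂) * nrm2 u := dot_le_nrm2 _ _
    have hq := hquad u
    have hnu : nrm2 (d₁ - d₂) = nrm2 u := by
      rw [show d₁ - d₂ = -u by rw [hu]; ring, nrm2_neg]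
    rcases eq_or_lt_of_le (nrm2_nonneg u) with h0 | h0
    · rw [hnu, ← h0]
      exact mul_nonneg (inv_nonneg.mpr hζ.le) (nrm2_nonneg _)
    · rw [hnu]
      have hstep : ζ * nrm2 u ≤ nrm2 (g₁ - g₂) := by
        have hq2 : ζ * nrm2 u * nrm2 u ≤ nrm2 (g₁ - g₂) * nrm2 u := by
          calc ζ * nrm2 u * nrm2 u = ζ * (nrm2 u)^2 := by ring
            _ ≤ u ⬝ᵥ (H *ᵥ u) := hq
            _ ≤ (g₁ - g₂) ⬝ᵥ u := hsum
            _ ≤ nrm2 (g₁ - g₂) * nrm2 u := hCS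
        exact le_of_mul_le_mul_right hq2 h0
      calc nrm2 u = ζ⁻¹ * (ζ * nrm2 u) := by field_simp
        _ ≤ ζ⁻¹ * nrm2 (g₁ - g₂) :=
            mul_le_mul_of_nonneg_left hstep (inv_nonneg.mpr hζ.le)
  -- continuity of dfun
  have hdcont : Continuous dfun := by
    have : LipschitzWith (Real.toNNReal (ζ⁻¹ * Real.sqrt n)) dfun := by
      refine LipschitzWith.of_dist_le_mul fun g₁ g₂ => ?_
      rw [dist_eq_norm, dist_eq_norm, Real.coe_toNNReal _ (by positivity)]
      calc ‖dfun g₁ - dfun g₂‖ ≤ nrm2 (dfun g₁ - dfun g₂) := norm_le_nrm2 _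
        _ ≤ ζ⁻¹ * nrm2 (g₁ - g₂) := hLip g₁ g₂
        _ ≤ ζ⁻¹ * (Real.sqrt n * ‖g₁ - g₂‖) :=
            mul_le_mul_of_nonneg_left (nrm2_le_sqrt_mul_norm _) (inv_nonneg.mpr hζ.le)
        _ = ζ⁻¹ * Real.sqrt n * ‖g₁ - g₂‖ := by ring
    exact this.continuous
  -- the norm terms are constant on the image of dfun
  have hGconst : ∀ g, Gᵀ *ᵥ dfun g = Gᵀ *ᵥ v := fun g => ((hmem _).1 (hdfun g).1).1
  -- notation
  set dγ := dfun γ with hdγ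
  -- pointwise key bound
  have hpt : ∀ g : Fin n → ℝ,
      γ ⬝ᵥ dγ - g ⬝ᵥ dfun g ≤
        ζ⁻¹ * κ * nrm2 (g - γ) + ζ⁻¹ * nrm2 (g - γ)^2 + (γ - g) ⬝ᵥ dγ := by
    intro g
    have hid : γ ⬝ᵥ dγ - g ⬝ᵥ dfun g
        = γ ⬝ᵥ (dγ - dfun g) + (γ - g) ⬝ᵥ (dfun g - dγ) + (γ - g) ⬝ᵥ dγ := by
      simp only [dotProduct_sub, sub_dotProduct]
      ring
    have hb1 : γ ⬝ᵥ (dγ - dfun g) ≤ κ * (ζ⁻¹ * nrm2 (g - γ)) := by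
      calc γ ⬝ᵥ (dγ - dfun g) ≤ nrm2 γ * nrm2 (dγ - dfun g) := dot_le_nrm2 _ _
        _ ≤ κ * (ζ⁻¹ * nrm2 (γ - g)) := by
            refine mul_le_mul hγ (hLip γ g) (nrm2_nonneg _) hκ.le
        _ = κ * (ζ⁻¹ * nrm2 (g - γ)) := by
            rw [show γ - g = -(g - γ) by ring, nrm2_neg]
    have hb2 : (γ - g) ⬝ᵥ (dfun g - dγ) ≤ nrm2 (g - γ) * (ζ⁻¹ * nrm2 (g - γ)) := by
      calc (γ - g) ⬝ᵥ (dfun g - dγ) ≤ nrm2 (γ - g) * nrm2 (dfun g - dγ) := dot_le_nrm2 _ _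
        _ ≤ nrm2 (γ - g) * (ζ⁻¹ * nrm2 (g - γ)) := by
            refine mul_le_mul_of_nonneg_left (hLip g γ) (nrm2_nonneg _)
        _ = nrm2 (g - γ) * (ζ⁻¹ * nrm2 (g - γ)) := by
            rw [show γ - g = -(g - γ) by ring, nrm2_neg]
    rw [hid]
    have : nrm2 (g - γ) * (ζ⁻¹ * nrm2 (g - γ)) = ζ⁻¹ * nrm2 (g - γ)^2 := by ring
    nlinarith [this]
  -- integrability facts
  have hNmeas : Measurable (fun ω => nrm2 (G' ω - γ)) :=
    nrm2_continuous.measurable.comp (hGmeas.sub measurable_const)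
  have hnormint : Integrable (fun ω => ‖G' ω - γ‖) P := (hGint.sub (integrable_const γ)).norm
  have hNint : Integrable (fun ω => nrm2 (G' ω - γ)) P := by
    refine Integrable.mono' (hnormint.const_mul (Real.sqrt n))
      hNmeas.aestronglyMeasurable (Filter.Eventually.of_forall fun ω => ?_)
    rw [Real.norm_eq_abs, abs_of_nonneg (nrm2_nonneg _)]
    exact nrm2_le_sqrt_mul_norm _
  -- integrability of coordinates and dot products
  have hGi : ∀ i, Integrable (fun ω => G' ω i) P := by
    intro i
    have := (ContinuousLinearMap.proj (R := ℝ) (φ := fun _ : Fin n => ℝ) i).integrable_comp hGint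
    simpa using this
  have hGimean : ∀ i, ∫ ω, G' ω i ∂P = γ i := by
    intro i
    have := (ContinuousLinearMap.proj (R := ℝ) (φ := fun _ : Fin n => ℝ) i).integral_comp_comm hGint
    simpa [hGmean] using this
  have hlineq : (fun ω => (γ - G' ω) ⬝ᵥ dγ) = fun ω => ∑ i, (γ i - G' ω i) * dγ i := by
    funext ω; simp [dotProduct]
  have hsummand : ∀ i : Fin n, Integrable (fun ω => (γ i - G' ω i) * dγ i) P :=
    fun i => ((integrable_const (γ i)).sub (hGi i)).mul_const _
  have hlinint : Integrable (fun ω => (γ - G' ω) ⬝ᵥ dγ) P := by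
    rw [hlineq]
    exact integrable_finset_sum _ fun i _ => hsummand i
  have hlinzero : ∫ ω, (γ - G' ω) ⬝ᵥ dγ ∂P = 0 := by
    rw [hlineq, integral_finset_sum _ fun i _ => hsummand i]
    refine Finset.sum_eq_zero fun i _ => ?_
    rw [integral_mul_const, integral_sub (integrable_const _) (hGi i), integral_const,
      hGimean i]
    simp
  -- integrability of φ ∘ G'
  have hφcont : Continuous (fun g : Fin n → ℝ => g ⬝ᵥ dfun g) := by
    simp only [dotProduct]
    exact continuous_finset_sum _ fun i _ =>
      (continuous_apply i).mul ((continuous_apply i).comp hdcont)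
  have hφbound : ∀ g : Fin n → ℝ, |g ⬝ᵥ dfun g| ≤
      |γ ⬝ᵥ dγ| + (κ + nrm2 dγ) * (ζ⁻¹ + 1) * nrm2 (g - γ) + ζ⁻¹ * nrm2 (g - γ)^2 := by
    intro g
    have hid : g ⬝ᵥ dfun g - γ ⬝ᵥ dγ
        = γ ⬝ᵥ (dfun g - dγ) + (g - γ) ⬝ᵥ (dfun g - dγ) + (g - γ) ⬝ᵥ dγ := by
      simp only [dotProduct_sub, sub_dotProduct]
      ring
    have hL : nrm2 (dfun g - dγ) ≤ ζ⁻¹ * nrm2 (g - γ) := hLip g γ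
    have h1 : |γ ⬝ᵥ (dfun g - dγ)| ≤ κ * (ζ⁻¹ * nrm2 (g - γ)) := by
      calc |γ ⬝ᵥ (dfun g - dγ)| ≤ nrm2 γ * nrm2 (dfun g - dγ) := abs_dot_le_nrm2 _ _
        _ ≤ κ * (ζ⁻¹ * nrm2 (g - γ)) := mul_le_mul hγ hL (nrm2_nonneg _) hκ.le
    have h2 : |(g - γ) ⬝ᵥ (dfun g - dγ)| ≤ nrm2 (g - γ) * (ζ⁻¹ * nrm2 (g - γ)) := by
      calc |(g - γ) ⬝ᵥ (dfun g - dγ)| ≤ nrm2 (g - γ) * nrm2 (dfun g - dγ) := abs_dot_le_nrm2 _ _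
        _ ≤ nrm2 (g - γ) * (ζ⁻¹ * nrm2 (g - γ)) :=
            mul_le_mul_of_nonneg_left hL (nrm2_nonneg _)
    have h3 : |(g - γ) ⬝ᵥ dγ| ≤ nrm2 (g - γ) * nrm2 dγ := abs_dot_le_nrm2 _ _
    have habs : |g ⬝ᵥ dfun g| ≤ |γ ⬝ᵥ dγ| + |g ⬝ᵥ dfun g - γ ⬝ᵥ dγ| := by
      have := abs_add_le (γ ⬝ᵥ dγ) (g ⬝ᵥ dfun g - γ ⬝ᵥ dγ)
      simpa using this
    have htri : |g ⬝ᵥ dfun g - γ ⬝ᵥ dγ| ≤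
        κ * (ζ⁻¹ * nrm2 (g - γ)) + nrm2 (g - γ) * (ζ⁻¹ * nrm2 (g - γ))
          + nrm2 (g - γ) * nrm2 dγ := by
      rw [hid]
      calc |γ ⬝ᵥ (dfun g - dγ) + (g - γ) ⬝ᵥ (dfun g - dγ) + (g - γ) ⬝ᵥ dγ|
          ≤ |γ ⬝ᵥ (dfun g - dγ) + (g - γ) ⬝ᵥ (dfun g - dγ)| + |(g - γ) ⬝ᵥ dγ| := abs_add_le _ _
        _ ≤ |γ ⬝ᵥ (dfun g - dγ)| + |(g - γ) ⬝ᵥ (dfun g - dγ)| + |(g - γ) ⬝ᵥ dγ| := by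
            have := abs_add_le (γ ⬝ᵥ (dfun g - dγ)) ((g - γ) ⬝ᵥ (dfun g - dγ))
            linarith
        _ ≤ κ * (ζ⁻¹ * nrm2 (g - γ)) + nrm2 (g - γ) * (ζ⁻¹ * nrm2 (g - γ))
            + nrm2 (g - γ) * nrm2 dγ := by linarith
    have hN0 : 0 ≤ nrm2 (g - γ) := nrm2_nonneg _
    have hζ0 : 0 ≤ ζ⁻¹ := inv_nonneg.mpr hζ.le
    have hdγ0 : 0 ≤ nrm2 dγ := nrm2_nonneg _
    nlinarith [mul_nonneg hN0 hκ.le, mul_nonneg hN0 (mul_nonneg hζ0 hdγ0),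
      mul_nonneg hN0 hdγ0]
  have hφint : Integrable (fun ω => G' ω ⬝ᵥ dfun (G' ω)) P := by
    refine Integrable.mono'
      (((integrable_const (|γ ⬝ᵥ dγ|)).add
          (hNint.const_mul ((κ + nrm2 dγ) * (ζ⁻¹ + 1)))).add
        (hGint2.const_mul ζ⁻¹))
      ((hφcont.measurable.comp hGmeas).aestronglyMeasurable)
      (Filter.Eventually.of_forall fun ω => ?_)
    rw [Real.norm_eq_abs]
    have := hφbound (G' ω)
    simpa [add_assoc] using this
  -- expectation of the squared norm bounds expectation of the norm
  have hmN : 0 ≤ ∫ ω, nrm2 (G' ω - γ) ∂P :=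
    integral_nonneg fun ω => nrm2_nonneg _
  have hI1 : ∫ ω, nrm2 (G' ω - γ) ∂P ≤ Real.sqrt ρ := by
    set mm := ∫ ω, nrm2 (G' ω - γ) ∂P with hmm
    have hvar : mm^2 ≤ ∫ ω, nrm2 (G' ω - γ)^2 ∂P := by
      have hexp : ∀ ω : Ω, (nrm2 (G' ω - γ) - mm)^2
          = nrm2 (G' ω - γ)^2 - 2*mm*nrm2 (G' ω - γ) + mm^2 := fun ω => by ring
      have hintB : Integrable (fun ω => 2*mm*nrm2 (G' ω - γ)) P := hNint.const_mul _
      have hintA : Integrable (fun ω => nrm2 (G' ω - γ)^2 - 2*mm*nrm2 (G' ω - γ)) P :=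
        hGint2.sub hintB
      have h0 : 0 ≤ ∫ ω, (nrm2 (G' ω - γ) - mm)^2 ∂P :=
        integral_nonneg fun ω => sq_nonneg _
      have heq : ∫ ω, (nrm2 (G' ω - γ) - mm)^2 ∂P
          = ∫ ω, nrm2 (G' ω - γ)^2 ∂P - 2*mm*mm + mm^2 := by
        simp_rw [hexp]
        rw [integral_add hintA (integrable_const _),
          integral_sub hGint2 hintB, integral_const_mul, integral_const]
        simp [← hmm]
      rw [heq] at h0
      nlinarith
    have h2 : mm^2 ≤ ρ := le_trans hvar hGmom
    calc mm = Real.sqrt (mm^2) := (Real.sqrt_sq hmN).symm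
      _ ≤ Real.sqrt ρ := Real.sqrt_le_sqrt h2
  -- key expectation bound
  have hkey : γ ⬝ᵥ dγ - ∫ ω, G' ω ⬝ᵥ dfun (G' ω) ∂P ≤ ζ⁻¹ * (ρ + κ * Real.sqrt ρ) := by
    have hsub : γ ⬝ᵥ dγ - ∫ ω, G' ω ⬝ᵥ dfun (G' ω) ∂P
        = ∫ ω, (γ ⬝ᵥ dγ - G' ω ⬝ᵥ dfun (G' ω)) ∂P := by
      rw [integral_sub (integrable_const _) hφint, integral_const]
      simp
    rw [hsub]
    have hintC : Integrable (fun ω => ζ⁻¹ * κ * nrm2 (G' ω - γ)) P := hNint.const_mul _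
    have hintD : Integrable (fun ω => ζ⁻¹ * nrm2 (G' ω - γ)^2) P := hGint2.const_mul _
    have hintCD : Integrable
        (fun ω => ζ⁻¹ * κ * nrm2 (G' ω - γ) + ζ⁻¹ * nrm2 (G' ω - γ)^2) P := hintC.add hintD
    have hintLHS : Integrable (fun ω => γ ⬝ᵥ dγ - G' ω ⬝ᵥ dfun (G' ω)) P :=
      (integrable_const _).sub hφint
    have hmono : ∫ ω, (γ ⬝ᵥ dγ - G' ω ⬝ᵥ dfun (G' ω)) ∂P ≤
        ∫ ω, (ζ⁻¹ * κ * nrm2 (G' ω - γ) + ζ⁻¹ * nrm2 (G' ω - γ)^2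
          + (γ - G' ω) ⬝ᵥ dγ) ∂P := by
      refine integral_mono hintLHS (hintCD.add hlinint) ?_
      intro ω
      exact hpt (G' ω)
    refine le_trans hmono ?_
    rw [integral_add hintCD hlinint,
      integral_add hintC hintD,
      integral_const_mul, integral_const_mul, hlinzero]
    have hζ0 : 0 ≤ ζ⁻¹ := inv_nonneg.mpr hζ.le
    have b1 : ζ⁻¹ * κ * ∫ ω, nrm2 (G' ω - γ) ∂P ≤ ζ⁻¹ * κ * Real.sqrt ρ :=
      mul_le_mul_of_nonneg_left hI1 (by positivity)
    have b2 : ζ⁻¹ * ∫ ω, nrm2 (G' ω - γ)^2 ∂P ≤ ζ⁻¹ * ρ :=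
      mul_le_mul_of_nonneg_left hGmom hζ0
    nlinarith
  -- rewrite the goal
  simp only [hGconst]
  have hrw : ∀ ω, -(τ * (G' ω ⬝ᵥ dfun (G' ω))) + nrm2 b - nrm2 (b + Gᵀ *ᵥ v)
      = -(τ * (G' ω ⬝ᵥ dfun (G' ω))) + (nrm2 b - nrm2 (b + Gᵀ *ᵥ v)) := fun ω => by ring
  simp_rw [hrw]
  have hintE : Integrable (fun ω => -(τ * (G' ω ⬝ᵥ dfun (G' ω)))) P :=
    (hφint.const_mul τ).neg
  have hintF : ∫ ω, -(τ * (G' ω ⬝ᵥ dfun (G' ω))) ∂P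
      = -(τ * ∫ ω, G' ω ⬝ᵥ dfun (G' ω) ∂P) := by
    rw [integral_neg, integral_const_mul]
  rw [integral_add hintE (integrable_const _), hintF, integral_const]
  simp only [measure_univ, ENNReal.toReal_one, probReal_univ, one_smul, smul_eq_mul, one_mul]
  have hGdγ : Gᵀ *ᵥ dγ = Gᵀ *ᵥ v := hGconst γ
  rw [hGdγ]
  nlinarith [mul_le_mul_of_nonneg_left hkey hτ.le]
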